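/- arXiv:2206.00537 — 2 statements merged into one kernel-verified Lean document; each statement's English description precedes it below -/
import Mathlib

section
/- Let (X, M, μ) and (Ω, B, P) be probability spaces and ξ : X × Ω → ℝ jointly measurable with ξ(x,·) integrable and x ↦ ξ(x,ω) integrable, defining ξ[X](ω) = ∫_X ξ(x, ω) μ(dx). Let q > 1 and suppose sup_{x ∈ X} P(|ξ(x)| ≥ t) ≤ t^{−q} for all t ≥ 1. Then there exists a constant C = C(q) < ∞, depending only on q, such that P(|ξ[X]| ≥ t) ≤ C t^{−q} for all t ≥ 1. -/
open MeasureTheory Real ENNReal Set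

/-! Split `|ξ(x)| ≤ s + |ξ(x)| 1{|ξ(x)| > s}` with `s = t/2`. Then `|ξ[X]| ≥ t` forces the
spatial average of the large part to exceed `s`; by Markov's inequality and Tonelli this has
probability at most `s⁻¹ sup_x E[|ξ(x)| 1{|ξ(x)| > s}]`, and the layer-cake formula bounds the
expectation by `q/(q-1) s^{1-q}` using only the power tail beyond `s`. -/

noncomputable def absAbove (s : ℝ) : ℝ → ℝ :=
  {r | s < |r|}.indicator abs

lemma absAbove_nonneg (s r : ℝ) : 0 ≤ absAbove s r :=
  indicator_nonneg (fun r _ => abs_nonneg r) r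

lemma abs_le_add_absAbove {s : ℝ} (hs : 0 ≤ s) (r : ℝ) : |r| ≤ s + absAbove s r := by
  simp only [absAbove, indicator, mem_ofPred_eq]
  split_ifs with h <;> linarith

lemma measurable_absAbove (s : ℝ) : Measurable (absAbove s) :=
  measurable_abs.indicator (measurableSet_lt measurable_const measurable_abs)

lemma lintegral_Ioi_ofReal_max_rpow_neg {q s : ℝ} (hq : 1 < q) (hs : 0 < s) :
    ∫⁻ u in Ioi 0, ENNReal.ofReal (max u s ^ (-q)) =
      ENNReal.ofReal (q / (q - 1) * s ^ (1 - q)) := by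
  have below :
      ∫⁻ u in Ioc 0 s, ENNReal.ofReal (max u s ^ (-q)) = ENNReal.ofReal (s ^ (1 - q)) := by
    rw [setLIntegral_congr_fun measurableSet_Ioc (g := fun _ => ENNReal.ofReal (s ^ (-q)))
        fun u hu => by rw [max_eq_right hu.2],
      setLIntegral_const, Real.volume_Ioc, sub_zero, ← ENNReal.ofReal_mul (by positivity),
      show 1 - q = -q + 1 by ring, Real.rpow_add hs, Real.rpow_one]
  have above : ∫⁻ u in Ioi s, ENNReal.ofReal (max u s ^ (-q)) =
      ENNReal.ofReal (s ^ (1 - q) / (q - 1)) := by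
    rw [setLIntegral_congr_fun measurableSet_Ioi (g := fun u => ENNReal.ofReal (u ^ (-q)))
        fun u hu => by rw [max_eq_left hu.le],
      ← ofReal_integral_eq_lintegral_ofReal (integrableOn_Ioi_rpow_of_lt (by linarith) hs)
        (ae_restrict_of_forall_mem measurableSet_Ioi fun u hu => rpow_nonneg (hs.trans hu).le _),
      integral_Ioi_rpow_of_lt (by linarith) hs, show -q + 1 = -(q - 1) by ring, div_neg,
      neg_div, neg_neg, neg_sub]
  rw [← Ioc_union_Ioi_eq_Ioi hs.le, lintegral_union measurableSet_Ioi Ioc_disjoint_Ioi_same,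
    below, above,
    ← ENNReal.ofReal_add (by positivity) (div_nonneg (by positivity) (by linarith))]
  have : q - 1 ≠ 0 := by linarith
  congr 1
  field_simp
  ring

lemma lintegral_absAbove_le_of_tail {Ω : Type*} [MeasurableSpace Ω] {P : Measure Ω}
    {f : Ω → ℝ} (hf : Measurable f) {q s : ℝ} (hq : 1 < q) (hs : 0 < s)
    (htail : ∀ t, s ≤ t → P {ω | t ≤ |f ω|} ≤ ENNReal.ofReal (t ^ (-q))) :
    ∫⁻ ω, ENNReal.ofReal (absAbove s (f ω)) ∂P ≤
      ENNReal.ofReal (q / (q - 1) * s ^ (1 - q)) := by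
  have level_set : ∀ u > 0, {ω | u ≤ absAbove s (f ω)} ⊆ {ω | max u s ≤ |f ω|} := by
    intro u hu ω hω
    simp only [absAbove, indicator, mem_ofPred_eq] at hω ⊢
    split_ifs at hω with h
    · exact max_le hω h.le
    · exact absurd hω (not_le.mpr hu)
  rw [lintegral_eq_lintegral_meas_le P (ae_of_all _ fun ω => absAbove_nonneg s (f ω))
    ((measurable_absAbove s).comp hf).aemeasurable, ← lintegral_Ioi_ofReal_max_rpow_neg hq hs]
  exact setLIntegral_mono' measurableSet_Ioi fun u hu =>
    (measure_mono (level_set u hu)).trans (htail _ (le_max_right u s))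

lemma one_le_two_rpow_mul_rpow_neg {q t : ℝ} (hq : 0 ≤ q) (ht : 0 < t) (ht2 : t ≤ 2) :
    1 ≤ 2 ^ q * t ^ (-q) := by
  rw [rpow_neg ht.le, ← div_eq_mul_inv, ← div_rpow zero_le_two ht.le]
  exact one_le_rpow ((one_le_div ht).mpr ht2) hq

lemma meas_le_abs_integral_le_lintegral_absAbove_div {X Ω : Type*}
    [MeasurableSpace X] [MeasurableSpace Ω]
    {μ : Measure X} [IsProbabilityMeasure μ] {P : Measure Ω} [SFinite P]
    {F : X → Ω → ℝ} (hF : Measurable (Function.uncurry F)) {s : ℝ} (hs : 0 < s) :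
    P {ω | 2 * s ≤ |∫ x, F x ω ∂μ|} ≤
      (∫⁻ x, ∫⁻ ω, ENNReal.ofReal (absAbove s (F x ω)) ∂P ∂μ) /
        ENNReal.ofReal s := by
  set G : X → Ω → ℝ≥0∞ := fun x ω => ENNReal.ofReal (absAbove s (F x ω))
  have hG : Measurable (Function.uncurry G) :=
    ENNReal.measurable_ofReal.comp ((measurable_absAbove s).comp hF)
  have event_subset :
      {ω | 2 * s ≤ |∫ x, F x ω ∂μ|} ⊆
        {ω | ENNReal.ofReal s ≤ ∫⁻ x, G x ω ∂μ} := by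
    intro ω hω
    refine ENNReal.le_of_add_le_add_left (a := ENNReal.ofReal s) ofReal_ne_top ?_
    calc ENNReal.ofReal s + ENNReal.ofReal s = ENNReal.ofReal (2 * s) := by
          rw [← ENNReal.ofReal_add hs.le hs.le, two_mul]
      _ ≤ ‖∫ x, F x ω ∂μ‖ₑ := by
          rw [Real.enorm_eq_ofReal_abs]
          exact ENNReal.ofReal_le_ofReal hω
      _ ≤ ∫⁻ x, ‖F x ω‖ₑ ∂μ := enorm_integral_le_lintegral_enorm _
      _ ≤ ∫⁻ x, (ENNReal.ofReal s + G x ω) ∂μ := lintegral_mono fun x => by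
          rw [Real.enorm_eq_ofReal_abs]
          exact (ENNReal.ofReal_le_ofReal (abs_le_add_absAbove hs.le (F x ω))).trans
            ENNReal.ofReal_add_le
      _ = ENNReal.ofReal s + ∫⁻ x, G x ω ∂μ := by
          rw [lintegral_add_left measurable_const, lintegral_const, measure_univ, mul_one]
  calc P {ω | 2 * s ≤ |∫ x, F x ω ∂μ|}
    _ ≤ P {ω | ENNReal.ofReal s ≤ ∫⁻ x, G x ω ∂μ} :=
        measure_mono event_subset
    _ ≤ (∫⁻ ω, ∫⁻ x, G x ω ∂μ ∂P) / ENNReal.ofReal s :=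
        meas_ge_le_lintegral_div hG.lintegral_prod_left.aemeasurable
          (by simpa using hs) ofReal_ne_top
    _ = (∫⁻ x, ∫⁻ ω, G x ω ∂P ∂μ) / ENNReal.ofReal s := by
        rw [lintegral_lintegral_swap hG.aemeasurable]

/-- Proposition 2.2: if a jointly measurable random field `ξ` satisfies the uniform
power tail estimate `P(|ξ(x)| ≥ t) ≤ t^{-q}` for `t ≥ 1`, with `q > 1`, then the
spatial average `ξ[X](ω) = ∫_X ξ(x,ω) μ(dx)` satisfies
`P(|ξ[X]| ≥ t) ≤ C t^{-q}` for `t ≥ 1`, with a constant `C = C(q)` depending only on `q`. -/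
theorem tail_of_spatial_average_power_tail
    (q : ℝ) (hq : 1 < q) :
    ∃ C : ℝ, 0 < C ∧
      ∀ (X Ω : Type) [MeasurableSpace X] [MeasurableSpace Ω]
        (μ : Measure X) (P : Measure Ω),
        IsProbabilityMeasure μ → IsProbabilityMeasure P →
        ∀ (ξ : X → Ω → ℝ),
          (Measurable fun z : X × Ω => ξ z.1 z.2) →
          (∀ x, Integrable (ξ x) P) →
          (∀ ω, Integrable (fun x => ξ x ω) μ) →
          (∀ x, ∀ t : ℝ, 1 ≤ t → P {ω | t ≤ |ξ x ω|} ≤ ENNReal.ofReal (t ^ (-q))) →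
          ∀ t : ℝ, 1 ≤ t →
            P {ω | t ≤ |∫ x, ξ x ω ∂μ|} ≤ ENNReal.ofReal (C * t ^ (-q)) := by
  have hq1 : 0 < q - 1 := by linarith
  refine ⟨2 ^ q * (q / (q - 1)), by positivity, ?_⟩
  intro X Ω _ _ μ P _ _ ξ hξ _ _ htail t ht
  have ht0 : 0 < t := by linarith
  rcases le_or_gt t 2 with ht2 | ht2
  · refine prob_le_one.trans (ENNReal.one_le_ofReal.mpr ?_)
    calc 1 ≤ 2 ^ q * t ^ (-q) := one_le_two_rpow_mul_rpow_neg (by linarith) ht0 ht2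
      _ ≤ 2 ^ q * (q / (q - 1)) * t ^ (-q) := by
        gcongr
        exact le_mul_of_one_le_right (by positivity) ((one_le_div hq1).mpr (by linarith))
  set s := t / 2 with hs_def
  have hs : 0 < s := by positivity
  have hmoment : ∀ x, ∫⁻ ω, ENNReal.ofReal (absAbove s (ξ x ω)) ∂P ≤
      ENNReal.ofReal (q / (q - 1) * s ^ (1 - q)) := fun x =>
    lintegral_absAbove_le_of_tail (hξ.comp (measurable_const.prodMk measurable_id)) hq hs
      fun u hu => htail x u (by linarith)
  calc P {ω | t ≤ |∫ x, ξ x ω ∂μ|} = P {ω | 2 * s ≤ |∫ x, ξ x ω ∂μ|} := by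
        rw [hs_def, mul_div_cancel₀ t two_ne_zero]
    _ ≤ (∫⁻ x, ∫⁻ ω, ENNReal.ofReal (absAbove s (ξ x ω)) ∂P ∂μ) /
          ENNReal.ofReal s :=
        meas_le_abs_integral_le_lintegral_absAbove_div hξ hs
    _ ≤ ENNReal.ofReal (q / (q - 1) * s ^ (1 - q)) / ENNReal.ofReal s := by
        gcongr
        exact (lintegral_mono hmoment).trans_eq
          (by rw [lintegral_const, measure_univ, mul_one])
    _ = ENNReal.ofReal (2 ^ q * (q / (q - 1)) * t ^ (-q)) := by
        rw [← ENNReal.ofReal_div_of_pos hs, mul_div_assoc, ← rpow_sub_one hs.ne',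
          show 1 - q - 1 = -q by ring, hs_def, div_rpow ht0.le zero_le_two, rpow_neg zero_le_two]
        field_simp
end

section
/- Let b ∈ (1, ∞], let ψ : (1, b) → (0, ∞) be measurable with inf_{p∈(1,b)} ψ(p) > 0, and let τ be a real random variable with ‖τ‖_{L^p(P)} ≤ ψ(p) for every p ∈ (1, b) (i.e. ‖τ‖Gψ ≤ 1). Then for every t ≥ e, P(|τ| ≥ t) ≤ exp(−h*(ln t)), where h(p) = p ln ψ(p) and h*(u) = sup_{p∈(1,b)} (p u − h(p)). -/
open MeasureTheory Real ENNReal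

/-!
Chebyshev's inequality in `L^p` gives `P(|τ| ≥ t) ≤ (ψ(p) / t)^p = exp (-(p ln t - h(p)))` for
every admissible `p`; taking the best `p` turns the exponent into `-h*(ln t)`.
-/

lemma ofReal_div_ofReal_rpow_le_exp {a t p : ℝ} (ht : 0 < t) (hp : 0 < p) :
    (ENNReal.ofReal a / ENNReal.ofReal t) ^ p ≤
      ENNReal.ofReal (exp (-(p * log t - p * log a))) := by
  rcases le_or_gt a 0 with ha | ha
  · simp [ENNReal.ofReal_of_nonpos ha, hp]
  · rw [← ENNReal.ofReal_div_of_pos ht, ENNReal.ofReal_rpow_of_nonneg (by positivity) hp.le,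
      rpow_def_of_pos (by positivity), log_div ha.ne' ht.ne']
    exact le_of_eq (by ring_nf)

lemma meas_abs_ge_le_exp_of_eLpNorm_le {α : Type*} [MeasurableSpace α] {μ : Measure α}
    {f : α → ℝ} (hf : AEStronglyMeasurable f μ) {a t p : ℝ} (ht : 0 < t) (hp : 0 < p)
    (hfa : eLpNorm f (ENNReal.ofReal p) μ ≤ ENNReal.ofReal a) :
    μ {x | t ≤ |f x|} ≤ ENNReal.ofReal (exp (-(p * log t - p * log a))) := by
  have hset : {x | t ≤ |f x|} = {x | ENNReal.ofReal t ≤ ‖f x‖ₑ} := by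
    ext x
    simp [Real.enorm_eq_ofReal_abs, ENNReal.ofReal_le_ofReal_iff (abs_nonneg _)]
  calc μ {x | t ≤ |f x|}
      ≤ (ENNReal.ofReal t)⁻¹ ^ p * eLpNorm f (ENNReal.ofReal p) μ ^ p := by
        rw [hset]
        simpa only [ENNReal.toReal_ofReal hp.le] using
          meas_ge_le_mul_pow_eLpNorm_enorm μ (ENNReal.ofReal_pos.2 hp).ne' ENNReal.ofReal_ne_top hf
            (ENNReal.ofReal_pos.2 ht).ne' (by simp)
    _ ≤ (ENNReal.ofReal t)⁻¹ ^ p * ENNReal.ofReal a ^ p := by gcongr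
    _ = (ENNReal.ofReal a / ENNReal.ofReal t) ^ p := by
        rw [ENNReal.div_eq_inv_mul, ENNReal.mul_rpow_of_nonneg _ _ hp.le]
    _ ≤ _ := ofReal_div_ofReal_rpow_le_exp ht hp

/-- When `S` is empty or unbounded above, `sSup S = 0` and the claim reduces to `m ≤ 1`. -/
lemma le_ofReal_exp_neg_sSup {m : ℝ≥0∞} {S : Set ℝ} (hm : m ≤ 1)
    (hS : ∀ y ∈ S, m ≤ ENNReal.ofReal (exp (-y))) :
    m ≤ ENNReal.ofReal (exp (-sSup S)) := by
  rcases S.eq_empty_or_nonempty with rfl | hne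
  · simpa using hm
  rcases eq_or_ne m 0 with rfl | hm0
  · exact zero_le
  have hm_top : m ≠ ∞ := ne_top_of_le_ne_top one_ne_top hm
  have hm_pos : 0 < m.toReal := ENNReal.toReal_pos hm0 hm_top
  have hlog : ∀ y ∈ S, y ≤ -log m.toReal := fun y hy => by
    have := (log_le_iff_le_exp hm_pos).2 (ENNReal.toReal_le_of_le_ofReal (exp_pos _).le (hS y hy))
    linarith
  rw [← ENNReal.ofReal_toReal hm_top]
  refine ENNReal.ofReal_le_ofReal ((log_le_iff_le_exp hm_pos).1 ?_)
  linarith [csSup_le hne hlog]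

theorem grand_lebesgue_tail_estimate_general
    {Ω : Type*} [MeasurableSpace Ω] (P : Measure Ω) [IsProbabilityMeasure P]
    (b : ℝ≥0∞)
    (ψ : ℝ → ℝ)
    (τ : Ω → ℝ) (hτ : Measurable τ)
    (hnorm : ∀ p : ℝ, 1 < p → ENNReal.ofReal p < b →
      eLpNorm τ (ENNReal.ofReal p) P ≤ ENNReal.ofReal (ψ p)) :
    ∀ t : ℝ, Real.exp 1 ≤ t →
      P {ω | t ≤ |τ ω|} ≤ ENNReal.ofReal
        (Real.exp
          (- sSup {y : ℝ | ∃ p : ℝ, 1 < p ∧ ENNReal.ofReal p < b ∧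
              y = p * Real.log t - p * Real.log (ψ p)})) := by
  intro t ht
  refine le_ofReal_exp_neg_sSup prob_le_one ?_
  rintro _ ⟨p, hp, hpb, rfl⟩
  exact meas_abs_ge_le_exp_of_eLpNorm_le hτ.aestronglyMeasurable
    ((exp_pos 1).trans_le ht) (one_pos.trans hp) (hnorm p hp hpb)

/-- Tail estimate for random variables with unit Grand Lebesgue norm: if
`‖τ‖_{L^p(P)} ≤ ψ(p)` for all `p ∈ (1,b)` (i.e. `‖τ‖Gψ ≤ 1`), where
`ψ : (1,b) → (0,∞)` is measurable with `inf ψ > 0`, then for every `t ≥ e`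
`P(|τ| ≥ t) ≤ exp(−h*(ln t))`, where `h(p) = p ln ψ(p)` and
`h*(u) = sup_{p ∈ (1,b)} (p u − h(p))` is the Young–Fenchel transform. -/
theorem grand_lebesgue_tail_estimate
    {Ω : Type*} [MeasurableSpace Ω] (P : Measure Ω) [IsProbabilityMeasure P]
    (b : ℝ≥0∞) (hb : 1 < b)
    (ψ : ℝ → ℝ) (hψmeas : Measurable ψ)
    (hψpos : ∃ c : ℝ, 0 < c ∧ ∀ p : ℝ, 1 < p → ENNReal.ofReal p < b → c ≤ ψ p)
    (τ : Ω → ℝ) (hτ : Measurable τ)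
    (hnorm : ∀ p : ℝ, 1 < p → ENNReal.ofReal p < b →
      eLpNorm τ (ENNReal.ofReal p) P ≤ ENNReal.ofReal (ψ p)) :
    ∀ t : ℝ, Real.exp 1 ≤ t →
      P {ω | t ≤ |τ ω|} ≤ ENNReal.ofReal
        (Real.exp
          (- sSup {y : ℝ | ∃ p : ℝ, 1 < p ∧ ENNReal.ofReal p < b ∧
              y = p * Real.log t - p * Real.log (ψ p)})) :=
  grand_lebesgue_tail_estimate_general P b ψ τ hτ hnorm
end
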